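/- With A_{a,L,n}(t,q) = Σ_{s≥0} t^s A_{a,L,n,s}(q) the generating polynomial of C_a ≀ S_n by (des_L, rmaj_{L,n}), the coefficients satisfy the recurrence A_{a,L,n,s}(q) = (a[s+1]_q − ℓ)·A_{a,L,n-1,s}(q) + (a q^s [n−s]_q + ℓ q^n)·A_{a,L,n-1,s-1}(q), where ℓ = |L|. -/

import Mathlib

open Finset Polynomial
open scoped Classical

/-- An element of the wreath product `C_a ≀ S_n`, viewed as a colored permutation:
the window is `[σ(1),…,σ(n)]` where `|σ(i)| = π(i)` (1-based) and the color of the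
letter in position `i` is `c(i)`, i.e. `σ(i) = α^{c(i)} |σ(i)|`. -/
abbrev ColPerm (a n : ℕ) := Equiv.Perm (Fin n) × (Fin n → Fin a)

/-- A rank function realizing (a canonical choice of) the linear order `<_L` of
Regev–Roichman on the letters `α^t j` (encoded as the pair `(t, j)` with `1 ≤ j`)
together with `0` (encoded as `(t, 0)`): letters with color in `L` are negative,
ordered with larger absolute value smaller; letters with color not in `L` are
positive, ordered with larger absolute value larger; `x <_L y ↔ rkL L x < rkL L y`. -/
def rkL {a : ℕ} (L : Finset (Fin a)) (x : Fin a × ℕ) : ℤ :=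
  if x.2 = 0 then 0
  else if x.1 ∈ L then -((x.2 : ℤ) * a + (x.1 : ℤ)) else (x.2 : ℤ) * a + (x.1 : ℤ)

/-- The letter `σ(i)` (as a color/absolute-value pair) in position `i` (1-based) of
the window of `σ`; positions outside `{1,…,n}` give the letter `0`. -/
def wval {a n : ℕ} [NeZero a] (σ : ColPerm a n) (i : ℕ) : Fin a × ℕ :=
  if h : 1 ≤ i ∧ i ≤ n then (σ.2 ⟨i - 1, by omega⟩, (σ.1 ⟨i - 1, by omega⟩ : ℕ) + 1)
  else (0, 0)

/-- The `L`-descent set `Des_L(σ) = {0 ≤ i ≤ n-1 : σ(i) >_L σ(i+1)}`, with `σ(0) := 0`. -/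
def DesL {a n : ℕ} [NeZero a] (L : Finset (Fin a)) (σ : ColPerm a n) : Finset ℕ :=
  (Finset.range n).filter (fun i => rkL L (wval σ (i + 1)) < rkL L (wval σ i))

/-- The `L`-descent number `des_L(σ) = |Des_L(σ)|`. -/
def desL {a n : ℕ} [NeZero a] (L : Finset (Fin a)) (σ : ColPerm a n) : ℕ := (DesL L σ).card

/-- The `L`-reverse major index `rmaj_{L,n}(σ) = Σ_{i ∈ Des_L(σ)} (n - i)`. -/
def rmajL {a n : ℕ} [NeZero a] (L : Finset (Fin a)) (σ : ColPerm a n) : ℕ :=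
  ∑ i ∈ DesL L σ, (n - i)

/-- `A_{a,L,n,s}(q) = Σ_{σ ∈ C_a≀S_n, des_L σ = s} q^{rmaj_{L,n} σ}`. -/
noncomputable def AmajS (a n s : ℕ) [NeZero a] (L : Finset (Fin a)) : Polynomial ℚ :=
  ∑ σ ∈ Finset.univ.filter (fun σ : ColPerm a n => desL L σ = s), X ^ rmajL L σ

/-!
Every colored permutation of size `m + 1` arises exactly once by inserting the letter `α^t (m+1)`
of largest absolute value into one of the `m + 1` gaps `p` of a colored permutation `σ` of size
`m`. For `t ∈ L` this letter is `<_L`-below every other letter and `0`, so gap `p` becomes a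
descent; for `t ∉ L` it is above all of them, so the position after it does (unless the letter is
last). Old descents just move past the new letter. Gaps at old descents (and, for `t ∉ L`, the last
gap) keep `des σ` and, in increasing order, raise `rmaj` by `0, 1, 2, …` (shifted by one for
`t ∈ L`); the other gaps raise `des` by one and, in decreasing order, give the consecutive
exponents `des σ + 1, des σ + 2, …`. Summing over the gaps, the `ℓ` colors in `L` and the `a - ℓ`
others gives the two coefficients.
-/

def natSuccAbove (k : ℕ) : ℕ ↪ ℕ :=
  ⟨fun j => if j < k then j else j + 1, fun i j h => by dsimp only at h; split_ifs at h <;> omega⟩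

lemma natSuccAbove_apply (k j : ℕ) : natSuccAbove k j = if j < k then j else j + 1 := rfl

lemma mem_map_natSuccAbove {D : Finset ℕ} {k i : ℕ} :
    i ∈ D.map (natSuccAbove k) ↔ (i < k ∧ i ∈ D) ∨ (k < i ∧ i - 1 ∈ D) := by
  simp only [mem_map, natSuccAbove_apply]
  constructor
  · rintro ⟨j, hj, rfl⟩
    split_ifs with h
    · exact Or.inl ⟨h, hj⟩
    · exact Or.inr ⟨by omega, by simpa using hj⟩
  · rintro (⟨h, hi⟩ | ⟨h, hi⟩)
    · exact ⟨i, hi, if_pos h⟩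
    · exact ⟨i - 1, hi, by rw [if_neg (by omega)]; omega⟩

lemma self_mem_map_natSuccAbove_succ {D : Finset ℕ} {k : ℕ} :
    k ∈ D.map (natSuccAbove (k + 1)) ↔ k ∈ D := by
  rw [mem_map_natSuccAbove]; simp

lemma succ_mem_map_natSuccAbove {D : Finset ℕ} {k : ℕ} :
    k + 1 ∈ D.map (natSuccAbove k) ↔ k ∈ D := by
  rw [mem_map_natSuccAbove]; simp

lemma sum_map_natSuccAbove_sub {D : Finset ℕ} {n : ℕ} (hD : ∀ j ∈ D, j < n) (k : ℕ) :
    ∑ i ∈ D.map (natSuccAbove k), (n + 1 - i) = ∑ j ∈ D, (n - j) + #(D.filter (· < k)) := by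
  rw [sum_map, card_filter, ← sum_add_distrib]
  refine sum_congr rfl fun j hj => ?_
  have := hD j hj
  rw [natSuccAbove_apply]
  split_ifs <;> omega

lemma card_filter_lt_succ (D : Finset ℕ) (p : ℕ) :
    #(D.filter (· < p + 1)) = #(D.filter (· < p)) + if p ∈ D then 1 else 0 := by
  rw [card_filter, card_filter, ← sum_ite_eq D p (fun _ => 1), ← sum_add_distrib]
  refine sum_congr rfl fun j _ => ?_
  split_ifs <;> omega

lemma sum_comp_card_filter_lt {M : Type*} [AddCommMonoid M] (D : Finset ℕ) (f : ℕ → M) :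
    ∑ p ∈ D, f #(D.filter (· < p)) = ∑ k ∈ range #D, f k := by
  induction D using Finset.induction_on_max with
  | empty => simp
  | insert b D hb ih =>
    have hbD : b ∉ D := fun h => (hb b h).false
    have hb' : (insert b D).filter (· < b) = D := by
      ext x; simp only [mem_filter, mem_insert]
      exact ⟨by rintro ⟨rfl | hx, h⟩; exacts [absurd h (lt_irrefl _), hx],
        fun hx => ⟨Or.inr hx, hb x hx⟩⟩
    have hD : ∀ p ∈ D, (insert b D).filter (· < p) = D.filter (· < p) := fun p hp => by
      rw [filter_insert, if_neg (hb p hp).not_gt]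
    rw [sum_insert hbD, card_insert_of_notMem hbD, sum_range_succ, hb', add_comm,
      sum_congr rfl fun p hp => by rw [hD p hp], ih]

lemma sum_sdiff_pow_card_filter_lt {R : Type*} [CommSemiring R] (x : R) {D : Finset ℕ} {N : ℕ}
    (hD : D ⊆ range N) :
    ∑ p ∈ range N \ D, x ^ (#(D.filter (· < p)) + (N - p)) =
      x ^ (#D + 1) * ∑ j ∈ range (N - #D), x ^ j := by
  set E := range N \ D
  have hE : #E = N - #D := by rw [card_sdiff_of_subset hD, card_range]
  have hDN : #D ≤ N := by simpa using card_le_card hD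
  -- the ranks of `p` in `D` and in its complement `E` add up to `p`
  have hrank : ∀ p ∈ E, #(D.filter (· < p)) + (N - p) = N - #(E.filter (· < p)) := by
    intro p hp
    have hpN : p < N := mem_range.1 (mem_sdiff.1 hp).1
    have hsplit : D.filter (· < p) ∪ E.filter (· < p) = range p := by
      rw [← filter_union, union_sdiff_of_subset hD]
      ext j; simp only [mem_filter, mem_range]; omega
    have := card_union_of_disjoint (disjoint_filter_filter (s := D) (t := E) (p := (· < p))
      (q := (· < p)) disjoint_sdiff)
    rw [hsplit, card_range] at this
    omega
  rw [sum_congr rfl fun p hp => by rw [hrank p hp],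
    sum_comp_card_filter_lt E (fun k => x ^ (N - k)), hE, mul_sum, ← sum_range_reflect]
  refine sum_congr rfl fun j hj => ?_
  rw [← pow_add]
  have := mem_range.1 hj
  congr 1
  omega

lemma sum_ite_add_ite_eq {R ι : Type*} [CommSemiring R] (x : R) (S : Finset ι) (Q : ι → Prop)
    [DecidablePred Q] (d r s : ℕ) (e : ι → ℕ) :
    ∑ p ∈ S, (if d + (if Q p then 1 else 0) = s then x ^ (r + e p) else 0) =
      (if d = s then x ^ r * ∑ p ∈ S.filter (¬ Q ·), x ^ e p else 0) +
      (if d + 1 = s then x ^ r * ∑ p ∈ S.filter Q, x ^ e p else 0) := by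
  rw [← sum_filter_not_add_sum_filter S Q, mul_sum, mul_sum]
  congr 1 <;> split_ifs <;> simp_all [sum_filter, pow_add]

section insertMax
variable {a m : ℕ}

def insertMax (σ : ColPerm a m) (t : Fin a) (p : Fin (m + 1)) : ColPerm a (m + 1) :=
  ((finSuccEquiv' p).trans ((Equiv.optionCongr σ.1).trans (finSuccEquiv' (Fin.last m)).symm),
   Fin.insertNth p t σ.2)

lemma insertMax_fst_apply_self (σ : ColPerm a m) (t : Fin a) (p : Fin (m + 1)) :
    (insertMax σ t p).1 p = Fin.last m := by
  simp [insertMax, finSuccEquiv'_at]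

lemma insertMax_fst_apply_succAbove (σ : ColPerm a m) (t : Fin a) (p : Fin (m + 1)) (j : Fin m) :
    (insertMax σ t p).1 (p.succAbove j) = (σ.1 j).castSucc := by
  simp only [insertMax, Equiv.trans_apply, finSuccEquiv'_succAbove, Equiv.optionCongr_apply,
    Option.map_some]
  exact finSuccEquiv'_symm_some_below (Fin.castSucc_lt_last _)

lemma insertMax_injective :
    Function.Injective fun x : ColPerm a m × Fin a × Fin (m + 1) => insertMax x.1 x.2.1 x.2.2 := by
  rintro ⟨⟨π, c⟩, t, p⟩ ⟨⟨π', c'⟩, t', p'⟩ h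
  simp only [Prod.ext_iff] at h
  obtain ⟨hπ, hc⟩ := h
  obtain rfl : p = p' := (insertMax (π', c') t' p').1.injective <| by
    rw [insertMax_fst_apply_self, ← hπ, insertMax_fst_apply_self]
  obtain ⟨rfl, rfl⟩ : t = t' ∧ c = c' := by
    simpa [insertMax, Fin.insertNth_injective2.eq_iff] using hc
  obtain rfl : π = π' := Equiv.ext fun j => Fin.castSucc_injective _ <| by
    rw [← insertMax_fst_apply_succAbove (π, c) t p, ← insertMax_fst_apply_succAbove (π', c) t p,
      hπ]
  rfl

lemma insertMax_bijective :
    Function.Bijective fun x : ColPerm a m × Fin a × Fin (m + 1) => insertMax x.1 x.2.1 x.2.2 := by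
  rw [Fintype.bijective_iff_injective_and_card]
  refine ⟨insertMax_injective, ?_⟩
  simp [Fintype.card_perm, Nat.factorial_succ]
  ring

end insertMax

section wval
variable {a m : ℕ} [NeZero a]

lemma wval_succ (σ : ColPerm a m) (j : Fin m) : wval σ (j + 1) = (σ.2 j, (σ.1 j : ℕ) + 1) := by
  simp [wval]

lemma wval_snd_le (σ : ColPerm a m) (i : ℕ) : (wval σ i).2 ≤ m := by
  unfold wval
  split_ifs
  · exact (σ.1 _).isLt
  · exact Nat.zero_le m

lemma wval_of_lt (σ : ColPerm a m) {i : ℕ} (h : m < i) : wval σ i = (0, 0) := by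
  simp [wval]; omega

lemma wval_insertMax_self (σ : ColPerm a m) (t : Fin a) (p : Fin (m + 1)) :
    wval (insertMax σ t p) (p + 1) = (t, m + 1) := by
  simp [wval_succ, insertMax]

lemma wval_insertMax_natSuccAbove (σ : ColPerm a m) (t : Fin a) (p : Fin (m + 1)) (i : ℕ) :
    wval (insertMax σ t p) (natSuccAbove (p + 1) i) = wval σ i := by
  rcases Nat.lt_or_ge m i with hi | hi
  · rw [wval_of_lt _ (by rw [natSuccAbove_apply]; split_ifs <;> omega), wval_of_lt _ hi]
  rcases i with _ | i
  · simp [natSuccAbove_apply, wval]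
  obtain ⟨j, rfl⟩ : ∃ j : Fin m, (j : ℕ) = i := ⟨⟨i, by omega⟩, rfl⟩
  have hval : natSuccAbove (p + 1) (j + 1) = (p.succAbove j : ℕ) + 1 := by
    rw [natSuccAbove_apply, Fin.succAbove]
    split_ifs <;> simp_all [Fin.lt_def]
    omega
  rw [hval, wval_succ, wval_succ, insertMax_fst_apply_succAbove]
  simp [insertMax]

lemma wval_insertMax_of_le (σ : ColPerm a m) (t : Fin a) (p : Fin (m + 1)) {i : ℕ}
    (h : i ≤ p) : wval (insertMax σ t p) i = wval σ i := by
  simpa [natSuccAbove_apply, Nat.lt_succ_of_le h] using wval_insertMax_natSuccAbove σ t p i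

lemma wval_insertMax_of_lt (σ : ColPerm a m) (t : Fin a) (p : Fin (m + 1)) {i : ℕ}
    (h : p + 1 < i) : wval (insertMax σ t p) i = wval σ (i - 1) := by
  have := wval_insertMax_natSuccAbove σ t p (i - 1)
  rwa [natSuccAbove_apply, if_neg (by omega), Nat.sub_add_cancel (by omega)] at this

end wval

section rank
variable {a : ℕ} (L : Finset (Fin a))

lemma abs_rkL_le (x : Fin a × ℕ) : |rkL L x| ≤ x.2 * a + x.1 := by
  unfold rkL
  split_ifs
  · simp only [abs_zero]; positivity
  · rw [abs_neg, abs_of_nonneg (by positivity)]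
  · rw [abs_of_nonneg (by positivity)]

lemma rkL_of_mem {t : Fin a} (ht : t ∈ L) (j : ℕ) : rkL L (t, j + 1) = -((j + 1) * a + t) := by
  simp [rkL, ht]

lemma rkL_of_not_mem {t : Fin a} (ht : t ∉ L) (j : ℕ) : rkL L (t, j + 1) = (j + 1) * a + t := by
  simp [rkL, ht]

end rank

section descents
variable {a m : ℕ} [NeZero a] (L : Finset (Fin a))

lemma DesL_subset_range (σ : ColPerm a m) : DesL L σ ⊆ range m := filter_subset _ _

lemma lt_of_mem_DesL {σ : ColPerm a m} {j : ℕ} (hj : j ∈ DesL L σ) : j < m :=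
  mem_range.1 (DesL_subset_range L σ hj)

lemma abs_rkL_wval_lt (σ : ColPerm a m) (i : ℕ) : |rkL L (wval σ i)| < (m + 1) * a := by
  have h1 : ((wval σ i).2 : ℤ) ≤ m := by exact_mod_cast wval_snd_le σ i
  have h2 : ((wval σ i).1 : ℤ) < a := by exact_mod_cast (wval σ i).1.isLt
  have h3 : (0 : ℤ) ≤ a := by positivity
  linarith [abs_rkL_le L (wval σ i), mul_le_mul_of_nonneg_right h1 h3]

lemma rkL_insertMax_lt {t : Fin a} (ht : t ∈ L) (σ : ColPerm a m) (i : ℕ) :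
    rkL L (t, m + 1) < rkL L (wval σ i) := by
  rw [rkL_of_mem L ht]
  linarith [(abs_lt.1 (abs_rkL_wval_lt L σ i)).1, t.val.cast_nonneg (α := ℤ)]

lemma lt_rkL_insertMax {t : Fin a} (ht : t ∉ L) (σ : ColPerm a m) (i : ℕ) :
    rkL L (wval σ i) < rkL L (t, m + 1) := by
  rw [rkL_of_not_mem L ht]
  linarith [(abs_lt.1 (abs_rkL_wval_lt L σ i)).2, t.val.cast_nonneg (α := ℤ)]

lemma mem_DesL_insertMax (σ : ColPerm a m) (t : Fin a) (p : Fin (m + 1)) (i : ℕ) :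
    i ∈ DesL L (insertMax σ t p) ↔
      (i < p ∧ i ∈ DesL L σ) ∨ (i = p ∧ rkL L (t, m + 1) < rkL L (wval σ p)) ∨
        (i = p + 1 ∧ p < m ∧ rkL L (wval σ (p + 1)) < rkL L (t, m + 1)) ∨
        (p + 1 < i ∧ i - 1 ∈ DesL L σ) := by
  have hp := p.isLt
  simp only [DesL, mem_filter, mem_range]
  rcases lt_trichotomy i p with hi | rfl | hi
  · rw [wval_insertMax_of_le _ _ _ hi, wval_insertMax_of_le _ _ _ hi.le]
    constructor
    · rintro ⟨-, h⟩; exact Or.inl ⟨hi, by omega, h⟩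
    · rintro (⟨-, -, h⟩ | ⟨h, -⟩ | ⟨h, -⟩ | ⟨h, -⟩) <;> first | exact ⟨by omega, h⟩ | omega
  · rw [wval_insertMax_self, wval_insertMax_of_le _ _ _ le_rfl]
    constructor
    · rintro ⟨-, h⟩; exact Or.inr (Or.inl ⟨rfl, h⟩)
    · rintro (⟨h, -⟩ | ⟨-, h⟩ | ⟨h, -⟩ | ⟨h, -⟩) <;> first | exact ⟨by omega, h⟩ | omega
  rcases Nat.lt_or_ge (p + 1) i with hi' | hi'
  · rw [wval_insertMax_of_lt _ _ _ hi', wval_insertMax_of_lt _ _ _ (by omega),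
      show i + 1 - 1 = i - 1 + 1 by omega]
    constructor
    · rintro ⟨hm, h⟩; exact Or.inr (Or.inr (Or.inr ⟨hi', by omega, h⟩))
    · rintro (⟨h, -⟩ | ⟨h, -⟩ | ⟨h, -⟩ | ⟨-, hm, h⟩) <;> first | exact ⟨by omega, h⟩ | omega
  · obtain rfl : i = p + 1 := by omega
    rw [wval_insertMax_self, wval_insertMax_of_lt _ _ _ (by omega), Nat.add_sub_cancel]
    constructor
    · rintro ⟨hm, h⟩; exact Or.inr (Or.inr (Or.inl ⟨rfl, by omega, h⟩))
    · rintro (⟨h, -⟩ | ⟨h, -⟩ | ⟨-, hm, h⟩ | ⟨h, -⟩) <;> first | exact ⟨by omega, h⟩ | omega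

lemma DesL_insertMax_of_mem {t : Fin a} (ht : t ∈ L) (σ : ColPerm a m) (p : Fin (m + 1)) :
    DesL L (insertMax σ t p) = insert (p : ℕ) ((DesL L σ).map (natSuccAbove (p + 1))) := by
  ext i
  simp only [mem_DesL_insertMax, mem_insert, mem_map_natSuccAbove, rkL_insertMax_lt L ht,
    (rkL_insertMax_lt L ht σ _).not_gt]
  grind

lemma DesL_insertMax_of_not_mem {t : Fin a} (ht : t ∉ L) (σ : ColPerm a m) (p : Fin (m + 1)) :
    DesL L (insertMax σ t p) = if p < m then insert ((p : ℕ) + 1) ((DesL L σ).map (natSuccAbove p))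
      else (DesL L σ).map (natSuccAbove p) := by
  ext i
  have hDm : ∀ j ∈ DesL L σ, j < m := fun _ => lt_of_mem_DesL L
  simp only [mem_DesL_insertMax, apply_ite (i ∈ ·), mem_insert, mem_map_natSuccAbove,
    lt_rkL_insertMax L ht, (lt_rkL_insertMax L ht σ _).not_gt]
  grind

end descents

section statistics
variable {a m : ℕ} [NeZero a] (L : Finset (Fin a))

lemma desL_insertMax_of_mem {t : Fin a} (ht : t ∈ L) (σ : ColPerm a m) (p : Fin (m + 1)) :
    desL L (insertMax σ t p) = desL L σ + if (p : ℕ) ∉ DesL L σ then 1 else 0 := by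
  rw [desL, DesL_insertMax_of_mem L ht, card_insert_eq_ite, card_map, desL]
  simp only [self_mem_map_natSuccAbove_succ]
  by_cases hp : (p : ℕ) ∈ DesL L σ <;> simp [hp]

lemma rmajL_insertMax_of_mem {t : Fin a} (ht : t ∈ L) (σ : ColPerm a m) (p : Fin (m + 1)) :
    rmajL L (insertMax σ t p) = rmajL L σ +
      (#((DesL L σ).filter (· < (p : ℕ))) + if (p : ℕ) ∉ DesL L σ then m + 1 - p else 1) := by
  have hmem := self_mem_map_natSuccAbove_succ (D := DesL L σ) (k := p)
  have hsum := sum_map_natSuccAbove_sub (D := DesL L σ) (fun _ => lt_of_mem_DesL L) (p + 1)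
  rw [card_filter_lt_succ] at hsum
  rw [rmajL, DesL_insertMax_of_mem L ht, rmajL]
  by_cases hp : (p : ℕ) ∈ DesL L σ
  · rw [insert_eq_of_mem (hmem.2 hp), hsum, if_pos hp, if_neg (not_not_intro hp)]
  · rw [sum_insert (mt hmem.1 hp), hsum, if_neg hp, if_pos hp]
    ring

lemma desL_insertMax_of_not_mem {t : Fin a} (ht : t ∉ L) (σ : ColPerm a m) (p : Fin (m + 1)) :
    desL L (insertMax σ t p) = desL L σ + if p < m ∧ (p : ℕ) ∉ DesL L σ then 1 else 0 := by
  have hmem := succ_mem_map_natSuccAbove (D := DesL L σ) (k := p)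
  rw [desL, DesL_insertMax_of_not_mem L ht, desL]
  split_ifs <;> simp_all

lemma rmajL_insertMax_of_not_mem {t : Fin a} (ht : t ∉ L) (σ : ColPerm a m) (p : Fin (m + 1)) :
    rmajL L (insertMax σ t p) = rmajL L σ +
      (#((DesL L σ).filter (· < (p : ℕ))) + if p < m ∧ (p : ℕ) ∉ DesL L σ then m - p else 0) := by
  have hmem := succ_mem_map_natSuccAbove (D := DesL L σ) (k := p)
  have hsum := sum_map_natSuccAbove_sub (D := DesL L σ) (fun _ => lt_of_mem_DesL L) p
  rw [rmajL, DesL_insertMax_of_not_mem L ht, rmajL]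
  split_ifs with hpm hp hp
  · rw [sum_insert (mt hmem.1 hp.2), hsum]
    omega
  · rw [insert_eq_of_mem (hmem.2 (by tauto)), hsum, add_zero]
  · exact absurd hp.1 hpm
  · rw [hsum, add_zero]

end statistics

section positionSums
variable {R : Type*} [CommRing R] (x : R) {a m : ℕ} [NeZero a] (L : Finset (Fin a))

lemma sum_insertMax_of_mem {t : Fin a} (ht : t ∈ L) (σ : ColPerm a m) (s : ℕ) :
    ∑ p : Fin (m + 1),
        (if desL L (insertMax σ t p) = s then x ^ rmajL L (insertMax σ t p) else 0) =
      (if desL L σ = s then x ^ rmajL L σ * (∑ j ∈ range (s + 1), x ^ j - 1) else 0) +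
      (if desL L σ + 1 = s then
        x ^ rmajL L σ * (x ^ s * ∑ j ∈ range (m + 1 - s), x ^ j + x ^ (m + 1)) else 0) := by
  set D := DesL L σ
  have hdes : desL L σ = #D := rfl
  have hDm : ∀ v ∈ D, v < m := fun v => lt_of_mem_DesL L
  have hD : (range (m + 1)).filter (fun v => ¬v ∉ D) = D := by
    ext v
    simp only [mem_filter, mem_range, not_not]
    exact ⟨And.right, fun h => ⟨by have := hDm v h; omega, h⟩⟩
  simp only [desL_insertMax_of_mem L ht, rmajL_insertMax_of_mem L ht]
  rw [Fin.sum_univ_eq_sum_range (fun v => if desL L σ + (if v ∉ D then 1 else 0) = s then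
    x ^ (rmajL L σ + (#(D.filter (· < v)) + if v ∉ D then m + 1 - v else 1)) else 0),
    sum_ite_add_ite_eq, hD, ← sdiff_eq_filter, hdes]
  congr 1
  · split_ifs with h
    · subst h
      rw [sum_comp_card_filter_lt D (fun k => x ^ (k + 1)), sum_range_succ' (x ^ ·)]
      ring
    · rfl
  · split_ifs with h
    · subst h
      have hDcard : #D ≤ m := (card_le_card (DesL_subset_range L σ)).trans_eq (card_range m)
      rw [sum_congr rfl fun p hp => by rw [if_pos (mem_sdiff.1 hp).2],
        sum_sdiff_pow_card_filter_lt x (fun v hv => mem_range.2 (by have := hDm v hv; omega)),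
        show m + 1 - #D = m + 1 - (#D + 1) + 1 by omega, sum_range_succ, mul_add, ← pow_add,
        show #D + 1 + (m + 1 - (#D + 1)) = m + 1 by omega]
    · rfl

lemma sum_insertMax_of_not_mem {t : Fin a} (ht : t ∉ L) (σ : ColPerm a m) (s : ℕ) :
    ∑ p : Fin (m + 1),
        (if desL L (insertMax σ t p) = s then x ^ rmajL L (insertMax σ t p) else 0) =
      (if desL L σ = s then x ^ rmajL L σ * ∑ j ∈ range (s + 1), x ^ j else 0) +
      (if desL L σ + 1 = s then x ^ rmajL L σ * (x ^ s * ∑ j ∈ range (m + 1 - s), x ^ j)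
        else 0) := by
  set D := DesL L σ
  have hdes : desL L σ = #D := rfl
  have hDm : ∀ v ∈ D, v < m := fun v => lt_of_mem_DesL L
  have hD : (range (m + 1)).filter (fun v => ¬(v < m ∧ v ∉ D)) = insert m D := by
    ext v
    simp only [mem_filter, mem_range, mem_insert]
    grind
  have hE : (range (m + 1)).filter (fun v => v < m ∧ v ∉ D) = range m \ D := by
    ext v
    simp only [mem_filter, mem_range, mem_sdiff]
    grind
  simp only [desL_insertMax_of_not_mem L ht, rmajL_insertMax_of_not_mem L ht]
  rw [Fin.sum_univ_eq_sum_range (fun v => if desL L σ + (if v < m ∧ v ∉ D then 1 else 0) = s then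
    x ^ (rmajL L σ + (#(D.filter (· < v)) + if v < m ∧ v ∉ D then m - v else 0)) else 0),
    sum_ite_add_ite_eq, hD, hE, hdes]
  congr 1
  · split_ifs with h
    · subst h
      rw [sum_insert fun h => (hDm m h).false, if_neg fun h => (lt_irrefl m h.1), add_zero,
        filter_true_of_mem hDm, sum_congr rfl fun p hp => by rw [if_neg fun h => h.2 hp, add_zero],
        sum_comp_card_filter_lt D (x ^ ·), sum_range_succ, add_comm]
    · rfl
  · split_ifs with h
    · subst h
      rw [sum_congr rfl fun p hp => by rw [if_pos (by simpa using hp)],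
        sum_sdiff_pow_card_filter_lt x fun v hv => mem_range.2 (hDm v hv), Nat.add_sub_add_right]
    · rfl

end positionSums

lemma sum_sum_insertMax {R : Type*} [CommRing R] (x : R) {a m : ℕ} [NeZero a]
    (L : Finset (Fin a)) (σ : ColPerm a m) (s : ℕ) :
    ∑ t : Fin a, ∑ p : Fin (m + 1),
        (if desL L (insertMax σ t p) = s then x ^ rmajL L (insertMax σ t p) else 0) =
      (if desL L σ = s then x ^ rmajL L σ else 0) * (a * ∑ j ∈ range (s + 1), x ^ j - #L) +
      (if desL L σ + 1 = s then x ^ rmajL L σ else 0) *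
        (a * x ^ s * ∑ j ∈ range (m + 1 - s), x ^ j + #L * x ^ (m + 1)) := by
  have hcard : (#(univ.filter (· ∉ L)) : R) = a - #L := by
    have := card_filter_add_card_filter_not (s := univ) (· ∈ L)
    rw [filter_univ_mem, card_univ, Fintype.card_fin] at this
    rw [eq_sub_iff_add_eq, ← Nat.cast_add, add_comm, this]
  rw [← sum_filter_add_sum_filter_not univ (· ∈ L),
    sum_congr rfl fun t ht => sum_insertMax_of_mem x L (mem_filter.1 ht).2 σ s,
    sum_congr rfl fun t ht => sum_insertMax_of_not_mem x L (mem_filter.1 ht).2 σ s,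
    sum_const, sum_const, nsmul_eq_mul, nsmul_eq_mul, filter_univ_mem, hcard]
  split_ifs <;> ring

lemma AmajS_eq_sum_ite (a m s : ℕ) [NeZero a] (L : Finset (Fin a)) :
    AmajS a m s L = ∑ σ : ColPerm a m, if desL L σ = s then X ^ rmajL L σ else 0 :=
  sum_filter _ _

lemma sum_ite_desL_add_one_eq (a m s : ℕ) [NeZero a] (L : Finset (Fin a)) :
    ∑ σ : ColPerm a m, (if desL L σ + 1 = s then (X : ℚ[X]) ^ rmajL L σ else 0) =
      if s = 0 then 0 else AmajS a m (s - 1) L := by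
  rcases s with _ | s <;> simp [AmajS_eq_sum_ite]

/-- The recurrence
`A_{a,L,n,s}(q) = (a[s+1]_q − ℓ) A_{a,L,n-1,s}(q) + (a q^s [n−s]_q + ℓ q^n) A_{a,L,n-1,s-1}(q)`
where `ℓ = |L|` (with the convention `A_{a,L,n-1,-1} = 0`). -/
theorem AmajS_recurrence (a n s : ℕ) [NeZero a] (L : Finset (Fin a)) (hn : 1 ≤ n) :
    AmajS a n s L =
      ((a : Polynomial ℚ) * (∑ j ∈ Finset.range (s + 1), X ^ j) - (L.card : Polynomial ℚ)) *
          AmajS a (n - 1) s L +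
      ((a : Polynomial ℚ) * X ^ s * (∑ j ∈ Finset.range (n - s), X ^ j) +
          (L.card : Polynomial ℚ) * X ^ n) *
        (if s = 0 then 0 else AmajS a (n - 1) (s - 1) L) := by
  obtain ⟨m, rfl⟩ : ∃ m, n = m + 1 := ⟨n - 1, by omega⟩
  rw [Nat.add_sub_cancel, AmajS_eq_sum_ite, ← insertMax_bijective.sum_comp, AmajS_eq_sum_ite,
    ← sum_ite_desL_add_one_eq]
  simp only [Fintype.sum_prod_type, sum_sum_insertMax, sum_add_distrib, ← sum_mul]
  ring
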